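/- arXiv:2511.22591 — 2 statements merged into one kernel-verified Lean document; each statement's English description precedes it below -/
import Mathlib

section
/- Let a, b be distinct points of the open unit disk 𝔹² ⊂ ℂ. Define cen := (a(1−|b|²) + b(1−|a|²))/(2 − a·conj(b) − conj(a)·b), the hyperbolic midpoint m := (a(1−|b|²) + b(1−|a|²))/(1 − |a|²|b|² + √((1−|a|²)(1−|b|²))·|1 − conj(a)·b|), and t := tanh(ρ(a,b)/4). Then cen = m(1 − t²)/(1 − |m|²·t²). (Consequently the Euclidean disk B²(cen, |cen − a|) coincides with the hyperbolic disk of center m and radius ρ(a,b)/2.) -/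
open Complex

/-! With `P = 1 - |a|²|b|²`, `S = √((1 - |a|²)(1 - |b|²))` and `L = |1 - ā b|` one has
`L² = S² + |a - b|²`, so `cosh (ρ(a,b)/2) = L / S` and `t² = (L - S)/(L + S)`. The numerator `N`
shared by `cen` and `m` satisfies `|N|² = P² - S²L²`, while `cen = N / (P + L²)` and
`m = N / (P + SL)`; hence `|m|² = (P - SL)/(P + SL)` and everything reduces to the real identity
`(1 - t²)/(1 - |m|²t²) = (P + SL)/(P + L²)`. -/

/-- The hyperbolic distance of the unit disk:
`ρ(x,y) = 2·arsinh(|x−y|/√((1−|x|²)(1−|y|²)))`. -/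
noncomputable def hypDist (x y : ℂ) : ℝ :=
  2 * Real.arsinh (‖x - y‖ /
    Real.sqrt ((1 - (‖x‖)^2) * (1 - (‖y‖)^2)))

open ComplexConjugate

theorem Real.tanh_half_sq (y : ℝ) :
    Real.tanh (y / 2) ^ 2 = (Real.cosh y - 1) / (Real.cosh y + 1) := by
  obtain ⟨u, rfl⟩ : ∃ u, y = 2 * u := ⟨y / 2, by ring⟩
  have hu : 0 < Real.cosh u := Real.cosh_pos u
  rw [mul_div_cancel_left₀ _ two_ne_zero, Real.cosh_two_mul, Real.tanh_eq_sinh_div_cosh, div_pow,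
    Real.cosh_sq]
  field_simp
  ring

lemma Complex.norm_one_sub_conj_mul_sq (a b : ℂ) :
    ‖1 - conj a * b‖ ^ 2 = (1 - ‖a‖ ^ 2) * (1 - ‖b‖ ^ 2) + ‖a - b‖ ^ 2 := by
  simp only [Complex.sq_norm, normSq_apply, sub_re, sub_im, mul_re, mul_im, one_re, one_im,
    conj_re, conj_im]
  ring

lemma Complex.two_sub_mul_conj_sub_conj_mul (a b : ℂ) :
    2 - a * conj b - conj a * b = ((1 - ‖a‖ ^ 2 * ‖b‖ ^ 2 + ‖1 - conj a * b‖ ^ 2 : ℝ) : ℂ) := by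
  apply Complex.ext <;>
  simp only [Complex.sq_norm, normSq_apply, sub_re, sub_im, mul_re, mul_im, one_re, one_im,
    conj_re, conj_im, ofReal_re, ofReal_im, re_ofNat, im_ofNat] <;>
  ring

lemma Complex.norm_mul_one_sub_add_mul_one_sub_sq (a b : ℂ) :
    ‖a * (1 - (‖b‖ : ℂ) ^ 2) + b * (1 - (‖a‖ : ℂ) ^ 2)‖ ^ 2 =
      (1 - ‖a‖ ^ 2 * ‖b‖ ^ 2) ^ 2 - (1 - ‖a‖ ^ 2) * (1 - ‖b‖ ^ 2) * ‖1 - conj a * b‖ ^ 2 := by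
  simp only [← ofReal_pow, ← ofReal_one, ← ofReal_sub]
  simp only [Complex.sq_norm, normSq_apply, sub_re, sub_im, mul_re, mul_im, conj_re, conj_im,
    ofReal_re, ofReal_im, add_re, add_im]
  ring

lemma one_sub_norm_sq_pos {z : ℂ} (hz : ‖z‖ < 1) : 0 < 1 - ‖z‖ ^ 2 := by
  nlinarith [norm_nonneg z]

lemma cosh_hypDist_div_two {x y : ℂ} (hx : ‖x‖ < 1) (hy : ‖y‖ < 1) :
    Real.cosh (hypDist x y / 2) = ‖1 - conj x * y‖ / √((1 - ‖x‖ ^ 2) * (1 - ‖y‖ ^ 2)) := by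
  have hAB : 0 < (1 - ‖x‖ ^ 2) * (1 - ‖y‖ ^ 2) :=
    mul_pos (one_sub_norm_sq_pos hx) (one_sub_norm_sq_pos hy)
  have hS : 0 < √((1 - ‖x‖ ^ 2) * (1 - ‖y‖ ^ 2)) := Real.sqrt_pos.mpr hAB
  have key : 1 + (‖x - y‖ / √((1 - ‖x‖ ^ 2) * (1 - ‖y‖ ^ 2))) ^ 2 =
      (‖1 - conj x * y‖ / √((1 - ‖x‖ ^ 2) * (1 - ‖y‖ ^ 2))) ^ 2 := by
    rw [div_pow, div_pow, norm_one_sub_conj_mul_sq, Real.sq_sqrt hAB.le, add_div,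
      div_self hAB.ne']
  rw [hypDist, mul_div_cancel_left₀ _ two_ne_zero, Real.cosh_arsinh, key,
    Real.sqrt_sq (by positivity)]

lemma tanh_hypDist_div_four_sq {x y : ℂ} (hx : ‖x‖ < 1) (hy : ‖y‖ < 1) :
    Real.tanh (hypDist x y / 4) ^ 2 =
      (‖1 - conj x * y‖ - √((1 - ‖x‖ ^ 2) * (1 - ‖y‖ ^ 2))) /
        (‖1 - conj x * y‖ + √((1 - ‖x‖ ^ 2) * (1 - ‖y‖ ^ 2))) := by
  have hS : 0 < √((1 - ‖x‖ ^ 2) * (1 - ‖y‖ ^ 2)) :=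
    Real.sqrt_pos.mpr (mul_pos (one_sub_norm_sq_pos hx) (one_sub_norm_sq_pos hy))
  rw [show hypDist x y / 4 = hypDist x y / 2 / 2 by ring, Real.tanh_half_sq,
    cosh_hypDist_div_two hx hy]
  field_simp

noncomputable def hypMidpoint (a b : ℂ) : ℂ :=
  (a * (1 - (‖b‖ : ℂ) ^ 2) + b * (1 - (‖a‖ : ℂ) ^ 2)) /
    ((1 - ‖a‖ ^ 2 * ‖b‖ ^ 2 + √((1 - ‖a‖ ^ 2) * (1 - ‖b‖ ^ 2)) * ‖1 - conj a * b‖ : ℝ) : ℂ)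

lemma norm_hypMidpoint_sq {a b : ℂ} (ha : ‖a‖ < 1) (hb : ‖b‖ < 1) :
    ‖hypMidpoint a b‖ ^ 2 =
      (1 - ‖a‖ ^ 2 * ‖b‖ ^ 2 - √((1 - ‖a‖ ^ 2) * (1 - ‖b‖ ^ 2)) * ‖1 - conj a * b‖) /
        (1 - ‖a‖ ^ 2 * ‖b‖ ^ 2 + √((1 - ‖a‖ ^ 2) * (1 - ‖b‖ ^ 2)) * ‖1 - conj a * b‖) := by
  have hAB : 0 ≤ (1 - ‖a‖ ^ 2) * (1 - ‖b‖ ^ 2) :=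
    (mul_pos (one_sub_norm_sq_pos ha) (one_sub_norm_sq_pos hb)).le
  have hP : 0 < 1 - ‖a‖ ^ 2 * ‖b‖ ^ 2 := by
    nlinarith [one_sub_norm_sq_pos ha, one_sub_norm_sq_pos hb]
  have hD : 0 < 1 - ‖a‖ ^ 2 * ‖b‖ ^ 2 + √((1 - ‖a‖ ^ 2) * (1 - ‖b‖ ^ 2)) * ‖1 - conj a * b‖ := by
    positivity
  rw [hypMidpoint, norm_div, norm_real, Real.norm_of_nonneg hD.le, div_pow,
    norm_mul_one_sub_add_mul_one_sub_sq, div_eq_div_iff (by positivity) hD.ne']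
  linear_combination (1 - ‖a‖ ^ 2 * ‖b‖ ^ 2 + √((1 - ‖a‖ ^ 2) * (1 - ‖b‖ ^ 2)) * ‖1 - conj a * b‖) *
    ‖1 - conj a * b‖ ^ 2 * Real.sq_sqrt hAB

lemma one_sub_sq_div_one_sub_mul_sq {P S L t : ℝ} (hP : 0 < P) (hS : 0 < S) (hL : 0 ≤ L)
    (ht : t ^ 2 = (L - S) / (L + S)) :
    (1 - t ^ 2) / (1 - (P - S * L) / (P + S * L) * t ^ 2) = (P + S * L) / (P + L ^ 2) := by
  have h1 : 1 - t ^ 2 = 2 * S / (L + S) := by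
    rw [ht]
    field_simp
    ring
  have h2 : 1 - (P - S * L) / (P + S * L) * t ^ 2 =
      2 * S * (P + L ^ 2) / ((P + S * L) * (L + S)) := by
    rw [ht]
    field_simp
    ring
  rw [h1, h2]
  field_simp

theorem stmt_4_general (a b : ℂ) (ha : ‖a‖ < 1) (hb : ‖b‖ < 1) :
    let cen : ℂ := (a * (1 - (‖b‖ : ℂ)^2) + b * (1 - (‖a‖ : ℂ)^2)) /
      (2 - a * (starRingEnd ℂ b) - (starRingEnd ℂ a) * b)
    let m : ℂ := (a * (1 - (‖b‖ : ℂ)^2) + b * (1 - (‖a‖ : ℂ)^2)) /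
      ((1 : ℂ) - (‖a‖ : ℂ)^2 * (‖b‖ : ℂ)^2 +
        ((Real.sqrt ((1 - (‖a‖)^2) * (1 - (‖b‖)^2)) : ℝ) : ℂ) *
          ((‖1 - (starRingEnd ℂ a) * b‖ : ℝ) : ℂ))
    let t : ℝ := Real.tanh (hypDist a b / 4)
    cen = m * (1 - (t : ℂ)^2) / (1 - (‖m‖ : ℂ)^2 * (t : ℂ)^2) := by
  intro cen m t
  have hm : m = hypMidpoint a b := by simp only [m, hypMidpoint]; push_cast; rfl
  have hP : 0 < 1 - ‖a‖ ^ 2 * ‖b‖ ^ 2 := by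
    nlinarith [one_sub_norm_sq_pos ha, one_sub_norm_sq_pos hb]
  have hS : 0 < √((1 - ‖a‖ ^ 2) * (1 - ‖b‖ ^ 2)) :=
    Real.sqrt_pos.mpr (mul_pos (one_sub_norm_sq_pos ha) (one_sub_norm_sq_pos hb))
  set N := a * (1 - (‖b‖ : ℂ) ^ 2) + b * (1 - (‖a‖ : ℂ) ^ 2)
  set P := 1 - ‖a‖ ^ 2 * ‖b‖ ^ 2
  set S := √((1 - ‖a‖ ^ 2) * (1 - ‖b‖ ^ 2))
  set L := ‖1 - conj a * b‖
  have hfactor : (1 - t ^ 2) / (1 - ‖m‖ ^ 2 * t ^ 2) = (P + S * L) / (P + L ^ 2) := by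
    rw [hm, norm_hypMidpoint_sq ha hb]
    exact one_sub_sq_div_one_sub_mul_sq hP hS (norm_nonneg _) (tanh_hypDist_div_four_sq ha hb)
  have hDm : ((P + S * L : ℝ) : ℂ) ≠ 0 := ofReal_ne_zero.mpr (by positivity)
  calc cen = N / (2 - a * conj b - conj a * b) := rfl
    _ = N / ((P + L ^ 2 : ℝ) : ℂ) := by rw [two_sub_mul_conj_sub_conj_mul]
    _ = hypMidpoint a b * (((P + S * L) / (P + L ^ 2) : ℝ) : ℂ) := by
      rw [hypMidpoint, ofReal_div, div_mul_div_cancel₀ hDm]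
    _ = m * (((1 - t ^ 2) / (1 - ‖m‖ ^ 2 * t ^ 2) : ℝ) : ℂ) := by rw [hfactor, hm]
    _ = m * (1 - (t : ℂ) ^ 2) / (1 - (‖m‖ : ℂ) ^ 2 * (t : ℂ) ^ 2) := by
      push_cast
      ring

/-- Lemma 2.4 (second claim): with `m` the hyperbolic midpoint of `a,b` and
`t = tanh(ρ(a,b)/4)`, one has `cen = m(1−t²)/(1−|m|²t²)`; consequently the Euclidean disk
`B²(cen,|cen−a|)` is the hyperbolic disk of center `m` and radius `ρ(a,b)/2`. -/
theorem stmt_4 (a b : ℂ) (ha : ‖a‖ < 1) (hb : ‖b‖ < 1) (hab : a ≠ b) :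
    let cen : ℂ := (a * (1 - (‖b‖ : ℂ)^2) + b * (1 - (‖a‖ : ℂ)^2)) /
      (2 - a * (starRingEnd ℂ b) - (starRingEnd ℂ a) * b)
    let m : ℂ := (a * (1 - (‖b‖ : ℂ)^2) + b * (1 - (‖a‖ : ℂ)^2)) /
      ((1 : ℂ) - (‖a‖ : ℂ)^2 * (‖b‖ : ℂ)^2 +
        ((Real.sqrt ((1 - (‖a‖)^2) * (1 - (‖b‖)^2)) : ℝ) : ℂ) *
          ((‖1 - (starRingEnd ℂ a) * b‖ : ℝ) : ℂ))
    let t : ℝ := Real.tanh (hypDist a b / 4)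
    cen = m * (1 - (t : ℂ)^2) / (1 - (‖m‖ : ℂ)^2 * (t : ℂ)^2) :=
  stmt_4_general a b ha hb
end

section
/- Let u, c, d, v, w be points on the unit circle occurring in this cyclic order, with the line through u and v parallel to the line through c and d (equivalently uv = cd) and c + d ≠ 0. Set m := (c+d)/|c+d|, a := LIS[u,v,c,w], b := LIS[u,v,d,w] and p := LIS[u,v,w,m]. Then p is the Hilbert midpoint of a and b and also their hyperbolic midpoint: (|u−p|·|a−v|)/(|u−a|·|p−v|) = (|u−b|·|p−v|)/(|u−p|·|b−v|) (i.e. h(a,p) = h(p,b)), and ρ(a,p) = ρ(p,b), where ρ(x,y) = 2·arsinh(|x−y|/√((1−|x|²)(1−|y|²))). -/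
open Complex

/-! For unit `u, v, s, q`, `u - LIS[u,v,s,q] = v (u-s)(u-q)/(uv-sq)` and
`1 - |LIS[u,v,s,q]|² = (u-s)(u-q)(v-s)(v-q)/(uv-sq)²`. Hence, for two points
`x = LIS[u,v,s,w]` and `y = LIS[u,v,s',w]` of the chord `uv`, the quantity
`sinh² (ρ(x,y)/2) = |x-y|²/((1-|x|²)(1-|y|²))` equals
`-uv(s-s')²/((u-s)(v-s)(u-s')(v-s'))`, in which `w` no longer appears, while `|u-x|/|v-x|`
splits into a factor for `s` and one for `w`. Both midpoint claims thus reduce to polynomial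
identities in `u, v, c, d, m` that hold modulo `m² = uv = cd`. -/

open ComplexConjugate

noncomputable def lis (u v s q : ℂ) : ℂ := (u * v * (s + q) - s * q * (u + v)) / (u * v - s * q)

section Lis

variable {u v s q : ℂ}

lemma lis_comm (u v s q : ℂ) : lis u v s q = lis u v q s := by
  unfold lis; ring

lemma lis_swap (u v s q : ℂ) : lis v u s q = lis u v s q := by
  unfold lis; ring

lemma sub_lis (h : u * v - s * q ≠ 0) :
    u - lis u v s q = v * (u - s) * (u - q) / (u * v - s * q) := by
  unfold lis; field_simp; ring

lemma sub_lis' (h : u * v - s * q ≠ 0) :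
    v - lis u v s q = u * (v - s) * (v - q) / (u * v - s * q) := by
  rw [← lis_swap, sub_lis (by rwa [mul_comm v])]; ring

lemma sub_lis_ne_zero (hv : v ≠ 0) (hs : u ≠ s) (hq : u ≠ q) (h : u * v - s * q ≠ 0) :
    u - lis u v s q ≠ 0 := by
  rw [sub_lis h]
  exact div_ne_zero (mul_ne_zero (mul_ne_zero hv (sub_ne_zero.2 hs)) (sub_ne_zero.2 hq)) h

lemma sub_lis_ne_zero' (hu : u ≠ 0) (hs : v ≠ s) (hq : v ≠ q) (h : u * v - s * q ≠ 0) :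
    v - lis u v s q ≠ 0 := by
  rw [← lis_swap]; exact sub_lis_ne_zero hu hs hq (by rwa [mul_comm v])

end Lis

lemma ne_zero_of_norm_eq_one {z : ℂ} (h : ‖z‖ = 1) : z ≠ 0 :=
  norm_ne_zero_iff.1 (h ▸ one_ne_zero)

lemma ofReal_sq_norm (z : ℂ) : ((‖z‖ ^ 2 : ℝ) : ℂ) = z * conj z := by
  rw [mul_conj']; push_cast; rfl

noncomputable def sinhSqHalfHypDist (x y : ℂ) : ℝ :=
  ‖x - y‖ ^ 2 / ((1 - ‖x‖ ^ 2) * (1 - ‖y‖ ^ 2))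

lemma hypDist_eq_two_mul_arsinh_sqrt (x y : ℂ) :
    hypDist x y = 2 * Real.arsinh √(sinhSqHalfHypDist x y) := by
  rw [hypDist, sinhSqHalfHypDist, Real.sqrt_div (sq_nonneg _), Real.sqrt_sq (norm_nonneg _)]

section UnitCircle

variable {u v s s' q : ℂ}

lemma conj_lis (hu : ‖u‖ = 1) (hv : ‖v‖ = 1) (hs : ‖s‖ = 1) (hq : ‖q‖ = 1)
    (h : u * v - s * q ≠ 0) :
    conj (lis u v s q) = (u + v - s - q) / (u * v - s * q) := by
  have hu0 : u ≠ 0 := ne_zero_of_norm_eq_one hu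
  have hv0 : v ≠ 0 := ne_zero_of_norm_eq_one hv
  have hs0 : s ≠ 0 := ne_zero_of_norm_eq_one hs
  have hq0 : q ≠ 0 := ne_zero_of_norm_eq_one hq
  have h' : u⁻¹ * v⁻¹ - s⁻¹ * q⁻¹ ≠ 0 := by
    rw [← mul_inv, ← mul_inv, inv_sub_inv (mul_ne_zero hu0 hv0) (mul_ne_zero hs0 hq0)]
    exact div_ne_zero (by rwa [← neg_sub, neg_ne_zero]) (by positivity)
  simp only [lis, map_div₀, map_sub, map_mul, map_add, ← inv_eq_conj hu, ← inv_eq_conj hv,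
    ← inv_eq_conj hs, ← inv_eq_conj hq]
  rw [div_eq_div_iff h' h]
  field_simp
  ring

lemma ofReal_one_sub_sq_norm_lis (hu : ‖u‖ = 1) (hv : ‖v‖ = 1) (hs : ‖s‖ = 1) (hq : ‖q‖ = 1)
    (h : u * v - s * q ≠ 0) :
    ((1 - ‖lis u v s q‖ ^ 2 : ℝ) : ℂ) =
      (u - s) * (u - q) * (v - s) * (v - q) / (u * v - s * q) ^ 2 := by
  rw [ofReal_sub, ofReal_sq_norm, conj_lis hu hv hs hq h, lis, ofReal_one]
  field_simp
  ring

lemma ofReal_sq_norm_lis_sub_lis (hu : ‖u‖ = 1) (hv : ‖v‖ = 1) (hs : ‖s‖ = 1)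
    (hs' : ‖s'‖ = 1) (hq : ‖q‖ = 1) (h : u * v - s * q ≠ 0) (h' : u * v - s' * q ≠ 0) :
    ((‖lis u v s q - lis u v s' q‖ ^ 2 : ℝ) : ℂ) =
      -(u * v * (s - s') ^ 2 * (u - q) ^ 2 * (v - q) ^ 2) /
        ((u * v - s * q) ^ 2 * (u * v - s' * q) ^ 2) := by
  rw [ofReal_sq_norm, map_sub, conj_lis hu hv hs hq h, conj_lis hu hv hs' hq h',
    div_sub_div _ _ h h', lis, lis, div_sub_div _ _ h h', div_mul_div_comm,
    div_eq_div_iff (by simp [h, h']) (by simp [h, h'])]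
  ring

lemma ofReal_sinhSqHalfHypDist_lis_lis (hu : ‖u‖ = 1) (hv : ‖v‖ = 1) (hs : ‖s‖ = 1)
    (hs' : ‖s'‖ = 1) (hq : ‖q‖ = 1) (h : u * v - s * q ≠ 0) (h' : u * v - s' * q ≠ 0)
    (huq : u ≠ q) (hvq : v ≠ q) :
    (sinhSqHalfHypDist (lis u v s q) (lis u v s' q) : ℂ) =
      -(u * v * (s - s') ^ 2) / ((u - s) * (v - s) * ((u - s') * (v - s'))) := by
  have huq' := sub_ne_zero.2 huq
  have hvq' := sub_ne_zero.2 hvq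
  rw [sinhSqHalfHypDist, ofReal_div, ofReal_mul, ofReal_sq_norm_lis_sub_lis hu hv hs hs' hq h h',
    ofReal_one_sub_sq_norm_lis hu hv hs hq h, ofReal_one_sub_sq_norm_lis hu hv hs' hq h']
  field_simp

end UnitCircle

section Reflection

variable {u v s s' q q' : ℂ}

lemma lis_eq_mul_conj_lis (hu : ‖u‖ = 1) (hv : ‖v‖ = 1) (hs : ‖s‖ = 1) (hq : ‖q‖ = 1)
    (hss' : s * s' = u * v) (hqq' : q * q' = u * v) (h : u * v - s * q ≠ 0) :
    lis u v s' q' = u * v * conj (lis u v s q) := by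
  have huv : u * v ≠ 0 := mul_ne_zero (ne_zero_of_norm_eq_one hu) (ne_zero_of_norm_eq_one hv)
  have h' : u * v - s' * q' ≠ 0 := by
    intro h0
    have : (u * v - s' * q') * (s * q) = -(u * v) * (u * v - s * q) := by
      linear_combination (-(q * q')) * hss' + (-(u * v)) * hqq'
    rw [h0, zero_mul] at this
    exact mul_ne_zero (neg_ne_zero.2 huv) h this.symm
  rw [conj_lis hu hv hs hq h, lis, mul_div_assoc', div_eq_div_iff h' h]
  linear_combination (-(u * v * q) + (u + v) * q * q' - u * v * q') * hss'
    + (-(u * v * s) + (u + v) * (u * v) - u * v * s') * hqq'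

lemma norm_mul_conj_sub_mul_conj (hu : ‖u‖ = 1) (hv : ‖v‖ = 1) (z z' : ℂ) :
    ‖u * v * conj z - u * v * conj z'‖ = ‖z - z'‖ := by
  rw [← mul_sub, ← map_sub, norm_mul, norm_mul, hu, hv, RCLike.norm_conj, one_mul, one_mul]

lemma zero_midpoint_mul_conj (hu : ‖u‖ = 1) (hv : ‖v‖ = 1) (a : ℂ) :
    (‖u - 0‖ * ‖a - v‖) / (‖u - a‖ * ‖0 - v‖) =
        (‖u - u * v * conj a‖ * ‖0 - v‖) / (‖u - 0‖ * ‖u * v * conj a - v‖) ∧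
      hypDist a 0 = hypDist 0 (u * v * conj a) := by
  have hu0 : u ≠ 0 := ne_zero_of_norm_eq_one hu
  have hv0 : v ≠ 0 := ne_zero_of_norm_eq_one hv
  have hσu : u * v * conj u = v := by rw [← inv_eq_conj hu]; field_simp
  have hσv : u * v * conj v = u := by rw [← inv_eq_conj hv]; field_simp
  have hub : ‖u - u * v * conj a‖ = ‖v - a‖ := by
    rw [← norm_mul_conj_sub_mul_conj hu hv v a, hσv]
  have hbv : ‖u * v * conj a - v‖ = ‖a - u‖ := by
    rw [← norm_mul_conj_sub_mul_conj hu hv a u, hσu]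
  refine ⟨?_, ?_⟩
  · simp [hub, hbv, hu, hv, norm_sub_rev]
  · simp [hypDist, hu, hv]

end Reflection

lemma norm_div_norm_eq_one {z : ℂ} (hz : z ≠ 0) : ‖z / (‖z‖ : ℂ)‖ = 1 := by
  rw [norm_div, norm_real, norm_norm, div_self (norm_ne_zero_iff.2 hz)]

lemma sq_add_div_norm_add {c d : ℂ} (hc : ‖c‖ = 1) (hd : ‖d‖ = 1) (hcd : c + d ≠ 0) :
    ((c + d) / (‖c + d‖ : ℂ)) ^ 2 = c * d := by
  have hc0 : c ≠ 0 := ne_zero_of_norm_eq_one hc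
  have hd0 : d ≠ 0 := ne_zero_of_norm_eq_one hd
  rw [div_pow, ← ofReal_pow, ofReal_sq_norm, map_add, ← inv_eq_conj hc, ← inv_eq_conj hd,
    inv_add_inv hc0 hd0]
  field_simp

lemma exp_mul_I_ne_exp_mul_I {x y : ℝ} (hxy : x < y) (hyx : y < x + 2 * Real.pi) :
    cexp (x * I) ≠ cexp (y * I) := fun h =>
  hxy.ne <| Circle.exp_injOn_Ico (a := x) (b := x + 2 * Real.pi) (by linarith)
    ⟨le_rfl, by linarith⟩ ⟨hxy.le, hyx⟩ (Circle.ext h)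

section Midpoint

variable {u v c d w m : ℂ}

lemma hilbert_midpoint_lis (hu : u ≠ 0) (hv : v ≠ 0) (huc : u ≠ c) (huw : u ≠ w) (hum : u ≠ m)
    (hvd : v ≠ d) (hvw : v ≠ w) (hvm : v ≠ m) (hDc : u * v - c * w ≠ 0)
    (hDd : u * v - d * w ≠ 0) (hDm : u * v - w * m ≠ 0) (hpar : u * v = c * d)
    (hm2 : m ^ 2 = u * v) :
    (‖u - lis u v w m‖ * ‖lis u v c w - v‖) / (‖u - lis u v c w‖ * ‖lis u v w m - v‖) =
      (‖u - lis u v d w‖ * ‖lis u v w m - v‖) / (‖u - lis u v w m‖ * ‖lis u v d w - v‖) := by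
  rw [lis_comm u v w m]
  replace hDm : u * v - m * w ≠ 0 := by rwa [mul_comm m]
  have key : (u - m) ^ 2 * ((v - c) * (v - d)) = (u - c) * (u - d) * (v - m) ^ 2 := by
    linear_combination (-u ^ 2 + u * c + u * d + v ^ 2 - v * c - v * d) * hm2
      + (-u ^ 2 + 2 * u * m + v ^ 2 - 2 * v * m) * hpar
  have identity : (u - lis u v m w) ^ 2 * ((v - lis u v c w) * (v - lis u v d w)) =
      (u - lis u v c w) * (u - lis u v d w) * (v - lis u v m w) ^ 2 := by
    rw [sub_lis hDm, sub_lis' hDm, sub_lis hDc, sub_lis' hDc, sub_lis hDd, sub_lis' hDd]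
    generalize u * v - m * w = Dm, u * v - c * w = Dc, u * v - d * w = Dd
    linear_combination (u ^ 2 * v ^ 2 * (u - w) ^ 2 * (v - w) ^ 2 / (Dm ^ 2 * Dc * Dd)) * key
  have hnorm := congrArg norm identity
  simp only [norm_mul, norm_pow] at hnorm
  rw [norm_sub_rev (lis u v c w), norm_sub_rev (lis u v m w), norm_sub_rev (lis u v d w),
    div_eq_div_iff
      (mul_ne_zero (norm_ne_zero_iff.2 (sub_lis_ne_zero hv huc huw hDc))
        (norm_ne_zero_iff.2 (sub_lis_ne_zero' hu hvm hvw hDm)))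
      (mul_ne_zero (norm_ne_zero_iff.2 (sub_lis_ne_zero hv hum huw hDm))
        (norm_ne_zero_iff.2 (sub_lis_ne_zero' hu hvd hvw hDd)))]
  linear_combination hnorm

lemma sinhSqHalfHypDist_midpoint_lis (hu : ‖u‖ = 1) (hv : ‖v‖ = 1) (hc : ‖c‖ = 1)
    (hd : ‖d‖ = 1) (hw : ‖w‖ = 1) (hm : ‖m‖ = 1) (huc : u ≠ c) (hud : u ≠ d) (huw : u ≠ w)
    (hvc : v ≠ c) (hvd : v ≠ d) (hvw : v ≠ w) (hum : u ≠ m) (hvm : v ≠ m)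
    (hDc : u * v - c * w ≠ 0) (hDd : u * v - d * w ≠ 0) (hDm : u * v - w * m ≠ 0)
    (hpar : u * v = c * d) (hm2 : m ^ 2 = u * v) :
    sinhSqHalfHypDist (lis u v c w) (lis u v w m) =
      sinhSqHalfHypDist (lis u v w m) (lis u v d w) := by
  rw [lis_comm u v w m]
  replace hDm : u * v - m * w ≠ 0 := by rwa [mul_comm m]
  have key : (c - m) ^ 2 * ((u - d) * (v - d)) = (m - d) ^ 2 * ((u - c) * (v - c)) := by
    linear_combination (u * c - u * d + v * c - v * d - c ^ 2 + d ^ 2) * hm2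
      + (u * c - u * d + v * c - v * d - 2 * c * m + 2 * d * m) * hpar
  apply ofReal_injective
  rw [ofReal_sinhSqHalfHypDist_lis_lis hu hv hc hm hw hDc hDm huw hvw,
    ofReal_sinhSqHalfHypDist_lis_lis hu hv hm hd hw hDm hDd huw hvw]
  have hden {s : ℂ} (hus : u ≠ s) (hvs : v ≠ s) : (u - s) * (v - s) ≠ 0 :=
    mul_ne_zero (sub_ne_zero.2 hus) (sub_ne_zero.2 hvs)
  rw [div_eq_div_iff (mul_ne_zero (hden huc hvc) (hden hum hvm))
    (mul_ne_zero (hden hum hvm) (hden hud hvd))]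
  linear_combination (-(u * v * (u - m) * (v - m))) * key

end Midpoint

theorem lis_midpoint {u v c d w m : ℂ} (hu : ‖u‖ = 1) (hv : ‖v‖ = 1) (hc : ‖c‖ = 1)
    (hd : ‖d‖ = 1) (hw : ‖w‖ = 1) (hm : ‖m‖ = 1) (hdist : [u, c, d, v, w].Nodup)
    (hpar : u * v = c * d) (hm2 : m ^ 2 = u * v) :
    (‖u - lis u v w m‖ * ‖lis u v c w - v‖) / (‖u - lis u v c w‖ * ‖lis u v w m - v‖) =
        (‖u - lis u v d w‖ * ‖lis u v w m - v‖) / (‖u - lis u v w m‖ * ‖lis u v d w - v‖) ∧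
      hypDist (lis u v c w) (lis u v w m) = hypDist (lis u v w m) (lis u v d w) := by
  simp only [List.nodup_cons, List.mem_cons, List.mem_nil_iff, or_false, not_or,
    List.nodup_nil, not_false_eq_true, and_true] at hdist
  obtain ⟨⟨huc, hud, huv, huw⟩, ⟨-, hcv, hcw⟩, ⟨hdv, hdw⟩, hvw⟩ := hdist
  have hu0 : u ≠ 0 := ne_zero_of_norm_eq_one hu
  have hv0 : v ≠ 0 := ne_zero_of_norm_eq_one hv
  have hc0 : c ≠ 0 := ne_zero_of_norm_eq_one hc
  have hd0 : d ≠ 0 := ne_zero_of_norm_eq_one hd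
  have hDc : u * v - c * w ≠ 0 := by
    rw [hpar, ← mul_sub]; exact mul_ne_zero hc0 (sub_ne_zero.2 hdw)
  have hDd : u * v - d * w ≠ 0 := by
    rw [hpar, mul_comm c, ← mul_sub]; exact mul_ne_zero hd0 (sub_ne_zero.2 hcw)
  by_cases hDm : u * v - w * m = 0
  · -- here `m = w`: `lis u v w m` divides by zero, so its junk value is `0`; the reflection
    -- `z ↦ u v conj z` swaps `u` with `v` and `lis u v c w` with `lis u v d w`, and fixes `0`
    have hmw : m = w := by
      have : m * (m - w) = 0 := by linear_combination hm2 + hDm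
      exact sub_eq_zero.1 ((mul_eq_zero.1 this).resolve_left (ne_zero_of_norm_eq_one hm))
    have hp : lis u v w m = 0 := by rw [lis, hDm, div_zero]
    have hb : lis u v d w = u * v * conj (lis u v c w) :=
      lis_eq_mul_conj_lis hu hv hc hw (by rw [hpar]) (by rw [← hm2, hmw, sq]) hDc
    rw [hp, hb]
    exact zero_midpoint_mul_conj hu hv _
  · have hum : u ≠ m := by
      rintro rfl
      exact huv (mul_left_cancel₀ hu0 (by rw [← sq, hm2]))
    have hvm : v ≠ m := by
      rintro rfl
      exact huv (mul_right_cancel₀ hv0 (by rw [← sq, hm2]))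
    refine ⟨hilbert_midpoint_lis hu0 hv0 huc huw hum (Ne.symm hdv) hvw hvm hDc hDd hDm hpar hm2,
      ?_⟩
    rw [hypDist_eq_two_mul_arsinh_sqrt, hypDist_eq_two_mul_arsinh_sqrt,
      sinhSqHalfHypDist_midpoint_lis hu hv hc hd hw hm huc hud huw (Ne.symm hcv) (Ne.symm hdv)
        hvw hum hvm hDc hDd hDm hpar hm2]

/-- Theorem 3.15 (2): with `u, c, d, v, w` in this cyclic order on the unit circle,
`L[u,v] ∥ L[c,d]` (i.e. `uv = cd`), `m = (c+d)/|c+d|`, `a = LIS[u,v,c,w]`,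
`b = LIS[u,v,d,w]`, `p = LIS[u,v,w,m]`, the point `p` is the Hilbert midpoint of `a` and
`b` and also their hyperbolic midpoint. -/
theorem stmt_14 (u c d v w : ℂ) (θ₁ θ₂ θ₃ θ₄ θ₅ : ℝ)
    (h12 : θ₁ < θ₂) (h23 : θ₂ < θ₃) (h34 : θ₃ < θ₄) (h45 : θ₄ < θ₅)
    (h51 : θ₅ < θ₁ + 2 * Real.pi)
    (hu : u = Complex.exp (θ₁ * Complex.I)) (hc : c = Complex.exp (θ₂ * Complex.I))
    (hd : d = Complex.exp (θ₃ * Complex.I)) (hv : v = Complex.exp (θ₄ * Complex.I))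
    (hw : w = Complex.exp (θ₅ * Complex.I))
    (hpar : u * v = c * d) (hcd : c + d ≠ 0) :
    let m : ℂ := (c + d) / ((‖c + d‖ : ℝ) : ℂ)
    let a : ℂ := (u * v * (c + w) - c * w * (u + v)) / (u * v - c * w)
    let b : ℂ := (u * v * (d + w) - d * w * (u + v)) / (u * v - d * w)
    let p : ℂ := (u * v * (w + m) - w * m * (u + v)) / (u * v - w * m)
    (‖u - p‖ * ‖a - v‖) /
        (‖u - a‖ * ‖p - v‖) =
      (‖u - b‖ * ‖p - v‖) /
        (‖u - p‖ * ‖b - v‖) ∧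
    hypDist a p = hypDist p b := by
  intro m a b p
  have hdist : [u, c, d, v, w].Nodup := by
    simp only [List.nodup_cons, List.mem_cons, List.mem_nil_iff, or_false, not_or,
      List.nodup_nil, not_false_eq_true, and_true, hu, hc, hd, hv, hw]
    and_intros
    all_goals refine exp_mul_I_ne_exp_mul_I ?_ ?_ <;> linarith
  have hc1 : ‖c‖ = 1 := by rw [hc, norm_exp_ofReal_mul_I]
  have hd1 : ‖d‖ = 1 := by rw [hd, norm_exp_ofReal_mul_I]
  have hm2 : m ^ 2 = u * v := by rw [hpar]; exact sq_add_div_norm_add hc1 hd1 hcd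
  exact lis_midpoint (by rw [hu, norm_exp_ofReal_mul_I]) (by rw [hv, norm_exp_ofReal_mul_I]) hc1
    hd1 (by rw [hw, norm_exp_ofReal_mul_I]) (norm_div_norm_eq_one hcd) hdist hpar hm2
end
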